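/- If p ≡ 1 (mod 8) and d = 4, then V_4(p) = (256 p t_0² - (32p² + 224p) t_0 + p³ + 167p² - 113p + 9)/576, where t_0 is the number of pairs (a,b) ∈ Γ × Γ with a + b = 1 in F_p and Γ is the subgroup of fourth powers. -/

import Mathlib

/-!
Let `χ` be the quartic character with `χ g = i` and `G m = g(χ^m, ψ)` the Gauss sums for
`ψ = e^{2πi · /p}`. Orthogonality of `1, χ, χ², χ³` writes each period as a discrete Fourier
transform of the Gauss sums, `4 η_s = ∑_m (i^s)⁻¹^m G m`, and it writes `16 t₀` as the sum of
all sixteen Jacobi sums `J(χ^m, χ^m')`. Since `p ≡ 1 (mod 8)`, `χ (-1) = 1`, so the periods are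
real and the classical relations `G 0 = -1`, `G 1 G 3 = G 2² = p`, `G 1² = G 2 J`,
`G 3² = G 2 K`, `J K = p` hold with `J = J(χ, χ)`, `K = J(χ³, χ³)`. They reduce `∑ (4 η_s)⁴` to a
quadratic in `J + K` and the Jacobi sum count to `16 t₀ = p - 11 + 3 (J + K)`; eliminating
`J + K` gives the formula.
-/

open Finset Complex ComplexConjugate

lemma geom_sum_eq_ite_of_pow_eq_one {K : Type*} [Field K] [DecidableEq K] {z : K} {n : ℕ}
    (hz : z ^ n = 1) : ∑ m ∈ range n, z ^ m = if z = 1 then (n : K) else 0 := by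
  split_ifs with h
  · simp [h]
  · rw [geom_sum_eq h, hz, sub_self, zero_div]

namespace MulChar

lemma isUnit_of_apply_ne_zero {R R' : Type*} [CommMonoid R] [CommMonoidWithZero R']
    {χ : MulChar R R'} {x : R} (hx : χ x ≠ 0) : IsUnit x := by
  by_contra h
  exact hx (χ.map_nonunit h)

lemma pow_apply_neg_one_eq_one {R R' : Type*} [CommRing R] [CommMonoidWithZero R']
    {χ : MulChar R R'} (hχneg : χ (-1) = 1) (m : ℕ) : (χ ^ m) (-1) = 1 := by
  rw [← Units.val_one, ← Units.val_neg, pow_apply_coe, Units.val_neg, Units.val_one, hχneg,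
    one_pow]

lemma sum_pow_apply_mul_inv_pow {R R' : Type*} [CommMonoid R] [Field R'] [DecidableEq R']
    (χ : MulChar R R') {n : ℕ} (hχ : χ ^ n = 1) (x : R) {c : R'} (hc : c ^ n = 1) :
    ∑ m ∈ range n, (χ ^ m) x * c⁻¹ ^ m = if χ x = c then (n : R') else 0 := by
  rcases Nat.eq_zero_or_pos n with rfl | hn
  · simp
  have hc0 : c ≠ 0 := by rintro rfl; simp [hn.ne'] at hc
  by_cases hx : IsUnit x
  · obtain ⟨u, rfl⟩ := hx
    have hzn : (χ u * c⁻¹) ^ n = 1 := by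
      rw [mul_pow, ← pow_apply_coe, hχ, one_apply_coe, inv_pow, hc, inv_one, one_mul]
    simp only [pow_apply_coe, ← mul_pow, geom_sum_eq_ite_of_pow_eq_one hzn,
      mul_inv_eq_one₀ hc0]
  · have hcx : χ x ≠ c := by rw [map_nonunit χ hx]; exact hc0.symm
    rw [if_neg hcx]
    exact sum_eq_zero fun m _ ↦ by rw [map_nonunit _ hx, zero_mul]

section Generator

variable {M R' : Type*} [CommMonoid M] [CommMonoidWithZero R'] {g : Mˣ} {χ : MulChar M R'}
  {n : ℕ}

lemma isPrimitiveRoot_of_apply_generator (hg : ∀ x, x ∈ Subgroup.zpowers g)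
    (hζ : IsPrimitiveRoot (χ g) n) : IsPrimitiveRoot χ n := by
  have key : ∀ m, χ ^ m = 1 ↔ χ g ^ m = 1 := fun m ↦ by
    rw [eq_iff hg, pow_apply_coe, one_apply_coe]
  exact ⟨(key n).2 hζ.pow_eq_one, fun l hl ↦ hζ.dvd_of_pow_eq_one l ((key l).1 hl)⟩

lemma mem_zpowers_pow_iff [Finite Mˣ] (hg : ∀ x, x ∈ Subgroup.zpowers g)
    (hζ : IsPrimitiveRoot (χ g) n) (u : Mˣ) : u ∈ Subgroup.zpowers (g ^ n) ↔ χ u = 1 := by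
  rw [← mem_powers_iff_mem_zpowers]
  constructor
  · rintro ⟨j, rfl⟩
    rw [Units.val_pow_eq_pow_val, Units.val_pow_eq_pow_val, map_pow, map_pow, hζ.pow_eq_one,
      one_pow]
  · obtain ⟨m, rfl⟩ := mem_powers_iff_mem_zpowers.2 (hg u)
    rw [Units.val_pow_eq_pow_val, map_pow, hζ.pow_eq_one_iff_dvd]
    rintro ⟨j, rfl⟩
    exact ⟨j, (pow_mul g n j).symm⟩

end Generator

lemma exists_apply_eq_I {M : Type*} [CommMonoid M] [Fintype M] [DecidableEq M] {g : Mˣ}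
    (hg : ∀ x, x ∈ Subgroup.zpowers g) (h4 : 4 ∣ Fintype.card Mˣ) :
    ∃ χ : MulChar M ℂ, χ g = I := by
  have hI : Units.mk0 I I_ne_zero ∈ rootsOfUnity (Fintype.card Mˣ) ℂ := by
    obtain ⟨k, hk⟩ := h4
    rw [_root_.mem_rootsOfUnity, hk, pow_mul]
    ext
    simp
  exact ⟨ofRootOfUnity hI hg, by simp [ofRootOfUnity_spec]⟩

end MulChar

lemma natCard_pairs_add_eq_one {F R' : Type*} [CommRing F] [CommMonoidWithZero R']
    [Nontrivial R'] {χ : MulChar F R'} {H : Subgroup Fˣ} (hH : ∀ u, u ∈ H ↔ χ u = 1) :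
    Nat.card {ab : Fˣ × Fˣ // ab.1 ∈ H ∧ ab.2 ∈ H ∧ (ab.1 : F) + ab.2 = 1}
      = Nat.card {x : F // χ x = 1 ∧ χ (1 - x) = 1} := by
  have hunit : ∀ {x : F}, χ x = 1 → IsUnit x := fun h ↦
    MulChar.isUnit_of_apply_ne_zero (h ▸ one_ne_zero)
  refine Nat.card_congr
    { toFun := fun ab ↦ ⟨ab.1.1, (hH _).1 ab.2.1, ?_⟩
      invFun := fun x ↦ ⟨((hunit x.2.1).unit, (hunit x.2.2).unit),
        (hH _).2 x.2.1, (hH _).2 x.2.2, add_sub_cancel _ _⟩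
      left_inv := fun ab ↦ ?_
      right_inv := fun x ↦ rfl }
  · rw [← eq_sub_of_add_eq' ab.2.2.2]; exact (hH _).1 ab.2.2.1
  · ext <;> simp [eq_sub_of_add_eq' ab.2.2.2]

lemma ZMod.pow_div_two_eq_neg_one_of_forall_mem_zpowers {p : ℕ} [Fact p.Prime] (hp : p ≠ 2)
    {g : (ZMod p)ˣ} (hg : ∀ x, x ∈ Subgroup.zpowers g) : (g : ZMod p) ^ (p / 2) = -1 := by
  refine (ZMod.pow_div_two_eq_neg_one_or_one p g.ne_zero).resolve_left fun h ↦ ?_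
  have hord : orderOf g = p - 1 := by
    rw [orderOf_eq_card_of_forall_mem_zpowers hg, Nat.card_eq_fintype_card, ZMod.card_units]
  have h2 := (Fact.out : p.Prime).two_le
  have := orderOf_le_of_pow_eq_one (n := p / 2) (by omega) (Units.ext (by simpa using h))
  omega

lemma Complex.ofReal_norm_pow_of_conj_eq {z : ℂ} (hz : conj z = z) {n : ℕ} (hn : Even n) :
    ((‖z‖ ^ n : ℝ) : ℂ) = z ^ n := by
  obtain ⟨r, rfl⟩ := conj_eq_iff_real.1 hz
  simp [norm_real, Real.norm_eq_abs, hn.pow_abs]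

section GaussianPeriod

variable {R R' : Type*} [CommRing R] [Fintype R] [CommRing R'] [DecidableEq R']

/-- For a generator `g`, the fibre of `χ` over `χ g ^ s` is the coset `g ^ s Γ` of the kernel
`Γ`, so `gaussianPeriod χ ψ (χ g ^ s)` is the period `η_s`. -/
noncomputable def gaussianPeriod (χ : MulChar R R') (ψ : AddChar R R') (c : R') : R' :=
  ∑ x with χ x = c, ψ x

lemma sum_range_pow_generator_eq_gaussianPeriod [Nontrivial R'] {g : Rˣ}
    (hg : ∀ x, x ∈ Subgroup.zpowers g) {χ : MulChar R R'} {n k s : ℕ}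
    (hζ : IsPrimitiveRoot (χ g) n) (hk : orderOf g = n * k) (hs : s < n) (ψ : AddChar R R') :
    ∑ j ∈ range k, ψ (g ^ (n * j + s) : Rˣ) = gaussianPeriod χ ψ (χ g ^ s) := by
  classical
  have hχpow : ∀ m, χ (g ^ m : Rˣ) = χ g ^ m := fun m ↦ by rw [Units.val_pow_eq_pow_val, map_pow]
  have hlt : ∀ j ∈ range k, n * j + s < orderOf g := fun j hj ↦ by
    rw [hk]; have := mem_range.1 hj; nlinarith
  refine sum_bij (fun j _ ↦ ((g ^ (n * j + s) : Rˣ) : R)) (fun j _ ↦ ?_) (fun a ha b hb hab ↦ ?_)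
    (fun x hx ↦ ?_) (fun _ _ ↦ rfl)
  · simp only [mem_filter, mem_univ, true_and]
    rw [hχpow, pow_add, pow_mul, hζ.pow_eq_one, one_pow, one_mul]
  · have := pow_injOn_Iio_orderOf (hlt a ha) (hlt b hb) (Units.ext hab)
    exact Nat.eq_of_mul_eq_mul_left (by omega : 0 < n) (by omega)
  · have hχx := (mem_filter.1 hx).2
    have hu : IsUnit x := MulChar.isUnit_of_apply_ne_zero <| by
      rw [hχx]; exact ((hζ.isUnit (by omega)).pow s).ne_zero
    obtain ⟨m, hm, hgm⟩ := mem_image.1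
      ((IsCyclic.image_range_orderOf hg).symm ▸ mem_univ hu.unit : hu.unit ∈ _)
    rw [← hu.unit_spec, ← hgm, hχpow, (hζ.isOfFinOrder (by omega)).pow_inj_mod,
      ← hζ.eq_orderOf, Nat.mod_eq_of_lt hs] at hχx
    refine ⟨m / n, mem_range.2 ?_, ?_⟩
    · rw [hk, mem_range] at hm
      exact Nat.div_lt_of_lt_mul hm
    · rw [← hχx, Nat.div_add_mod, hgm, hu.unit_spec]

lemma mul_gaussianPeriod {R' : Type*} [Field R'] [DecidableEq R'] {χ : MulChar R R'} {n : ℕ}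
    (hχ : χ ^ n = 1) (ψ : AddChar R R') {c : R'} (hc : c ^ n = 1) :
    n * gaussianPeriod χ ψ c = ∑ m ∈ range n, c⁻¹ ^ m * gaussSum (χ ^ m) ψ := by
  calc n * gaussianPeriod χ ψ c = ∑ x, (if χ x = c then (n : R') else 0) * ψ x := by
        simp only [gaussianPeriod, mul_sum, sum_filter, ite_mul, zero_mul, mul_ite, mul_zero]
    _ = ∑ x, ∑ m ∈ range n, (χ ^ m) x * c⁻¹ ^ m * ψ x := by
        simp only [← sum_mul, χ.sum_pow_apply_mul_inv_pow hχ _ hc]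
    _ = _ := by
        rw [sum_comm]
        simp only [gaussSum, mul_sum]
        exact sum_congr rfl fun m _ ↦ sum_congr rfl fun x _ ↦ by ring

lemma conj_gaussianPeriod {χ : MulChar R ℂ} (hχneg : χ (-1) = 1) (ψ : AddChar R ℂ) (c : ℂ) :
    conj (gaussianPeriod χ ψ c) = gaussianPeriod χ ψ c := by
  have hneg : ∀ x, χ (-x) = χ x := fun x ↦ by rw [neg_eq_neg_one_mul, map_mul, hχneg, one_mul]
  rw [gaussianPeriod, map_sum]
  simp only [← AddChar.map_neg_eq_conj, sum_filter]
  exact Fintype.sum_equiv (Equiv.neg R) _ _ fun x ↦ by simp [hneg]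

lemma sum_jacobiSum_pow_pow {R' : Type*} [Field R'] [DecidableEq R'] {χ : MulChar R R'}
    {n : ℕ} (hχ : χ ^ n = 1) :
    ∑ m ∈ range n, ∑ m' ∈ range n, jacobiSum (χ ^ m) (χ ^ m')
      = n ^ 2 * Nat.card {x : R // χ x = 1 ∧ χ (1 - x) = 1} := by
  classical
  have hind : ∀ x, ∑ m ∈ range n, (χ ^ m) x = if χ x = 1 then (n : R') else 0 := fun x ↦ by
    simpa using χ.sum_pow_apply_mul_inv_pow hχ x (one_pow n)
  calc ∑ m ∈ range n, ∑ m' ∈ range n, jacobiSum (χ ^ m) (χ ^ m')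
      = ∑ x, (∑ m ∈ range n, (χ ^ m) x) * ∑ m' ∈ range n, (χ ^ m') (1 - x) := by
        simp only [jacobiSum, sum_mul_sum]
        conv_rhs => rw [sum_comm]
        refine sum_congr rfl fun m _ ↦ ?_
        exact sum_comm
    _ = ∑ x, if χ x = 1 ∧ χ (1 - x) = 1 then (n : R') ^ 2 else 0 := by
        refine sum_congr rfl fun x _ ↦ ?_
        rw [hind, hind]
        split_ifs <;> simp_all [sq]
    _ = _ := by
        rw [sum_ite, sum_const_zero, add_zero, sum_const, nsmul_eq_mul, mul_comm,
          Nat.card_eq_fintype_card, Fintype.card_subtype]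

end GaussianPeriod

section GaussSum

variable {F R' : Type*} [Field F] [Fintype F] [CommRing R'] [IsDomain R']

lemma gaussSum_mul_gaussSum_inv_eq_card {χ : MulChar F R'} (hχ : χ ≠ 1) (hχneg : χ (-1) = 1)
    {ψ : AddChar F R'} (hψ : ψ.IsPrimitive) :
    gaussSum χ ψ * gaussSum χ⁻¹ ψ = Fintype.card F := by
  rw [← mul_gaussSum_inv_eq_gaussSum χ⁻¹ ψ, MulChar.inv_apply', inv_neg_one, hχneg, one_mul,
    gaussSum_mul_gaussSum_eq_card hχ hψ]

lemma jacobiSum_mul_card_eq {χ φ : MulChar F R'} (hχφ : χ * φ ≠ 1) (hχφneg : (χ * φ) (-1) = 1)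
    {ψ : AddChar F R'} (hψ : ψ.IsPrimitive) :
    jacobiSum χ φ * Fintype.card F = gaussSum χ ψ * gaussSum φ ψ * gaussSum (χ * φ)⁻¹ ψ := by
  rw [← jacobiSum_mul_nontrivial hχφ ψ, ← gaussSum_mul_gaussSum_inv_eq_card hχφ hχφneg hψ]
  ring

lemma gaussSum_pow_mul_gaussSum_pow_eq_card {χ : MulChar F R'} {n a b : ℕ}
    (hχ : IsPrimitiveRoot χ n) (hab : a + b = n) (ha : a ≠ 0) (hb : b ≠ 0)
    (hχneg : χ (-1) = 1) {ψ : AddChar F R'} (hψ : ψ ≠ 1) :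
    gaussSum (χ ^ a) ψ * gaussSum (χ ^ b) ψ = Fintype.card F := by
  have hinv : (χ ^ a)⁻¹ = χ ^ b :=
    inv_eq_of_mul_eq_one_right (by rw [← pow_add, hab, hχ.pow_eq_one])
  rw [← hinv]
  exact gaussSum_mul_gaussSum_inv_eq_card (hχ.pow_ne_one_of_pos_of_lt ha (by omega))
    (MulChar.pow_apply_neg_one_eq_one hχneg a) (AddChar.IsPrimitive.of_ne_one hψ)

lemma jacobiSum_pow_pow_mul_card_eq {χ : MulChar F R'} {n : ℕ} (hχ : IsPrimitiveRoot χ n)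
    (hχneg : χ (-1) = 1) {ψ : AddChar F R'} (hψ : ψ ≠ 1) (a b c : ℕ) (hab : ¬ n ∣ a + b)
    (habc : n ∣ a + b + c) :
    jacobiSum (χ ^ a) (χ ^ b) * Fintype.card F
      = gaussSum (χ ^ a) ψ * gaussSum (χ ^ b) ψ * gaussSum (χ ^ c) ψ := by
  have hinv : (χ ^ a * χ ^ b)⁻¹ = χ ^ c := inv_eq_of_mul_eq_one_right <| by
    rwa [← pow_add, ← pow_add, hχ.pow_eq_one_iff_dvd]
  rw [← hinv]
  refine jacobiSum_mul_card_eq ?_ ?_ (AddChar.IsPrimitive.of_ne_one hψ)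
  · rwa [← pow_add, Ne, hχ.pow_eq_one_iff_dvd]
  · rw [← pow_add]; exact MulChar.pow_apply_neg_one_eq_one hχneg _

end GaussSum

lemma add_pow_four_add_dft {R : Type*} [CommRing R] {i : R} (hi : i ^ 2 = -1) (a b c d : R) :
    (a + b + c + d) ^ 4 + (a - i * b - c + i * d) ^ 4 + (a - b + c - d) ^ 4
        + (a + i * b - c - i * d) ^ 4
      = 4 * (a ^ 4 + b ^ 4 + c ^ 4 + d ^ 4 + 12 * a ^ 2 * b * d + 6 * a ^ 2 * c ^ 2
        + 12 * a * c * (b ^ 2 + d ^ 2) + 6 * b ^ 2 * d ^ 2 + 12 * b * c ^ 2 * d) := by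
  linear_combination (12 * (a - c) ^ 2 * (b - d) ^ 2 + 2 * (b - d) ^ 4 * (i ^ 2 - 1)) * hi

lemma sum_dft_four_pow_four (a : ℕ → ℂ) :
    ∑ s ∈ range 4, (∑ m ∈ range 4, ((I ^ s)⁻¹) ^ m * a m) ^ 4
      = 4 * (a 0 ^ 4 + a 1 ^ 4 + a 2 ^ 4 + a 3 ^ 4 + 12 * a 0 ^ 2 * a 1 * a 3
        + 6 * a 0 ^ 2 * a 2 ^ 2 + 12 * a 0 * a 2 * (a 1 ^ 2 + a 3 ^ 2) + 6 * a 1 ^ 2 * a 3 ^ 2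
        + 12 * a 1 * a 2 ^ 2 * a 3) := by
  have h : (-I) ^ 3 = I := by rw [neg_pow, I_pow_three]; ring
  norm_num [sum_range_succ, I_pow_three, h]
  linear_combination add_pow_four_add_dft I_sq (a 0) (a 1) (a 2) (a 3)

section Quartic

variable {F : Type*} [Field F] [Fintype F] {χ : MulChar F ℂ} {ψ : AddChar F ℂ}

lemma sum_jacobiSum_pow_pow_of_isPrimitiveRoot_four (hχ : IsPrimitiveRoot χ 4)
    (hχneg : χ (-1) = 1) (hψ : ψ ≠ 1) :
    ∑ m ∈ range 4, ∑ m' ∈ range 4, jacobiSum (χ ^ m) (χ ^ m')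
      = Fintype.card F - 11 + 3 * (jacobiSum χ χ + jacobiSum (χ ^ 3) (χ ^ 3)) := by
  have hq : (Fintype.card F : ℂ) ≠ 0 := Nat.cast_ne_zero.2 Fintype.card_ne_zero
  have hχ2 : χ ^ 2 ≠ 1 := hχ.pow_ne_one_of_pos_of_lt two_ne_zero (by decide)
  have hχ3 : χ ^ 3 ≠ 1 := hχ.pow_ne_one_of_pos_of_lt three_ne_zero (by decide)
  have key := jacobiSum_pow_pow_mul_card_eq hχ hχneg hψ
  have j12 : jacobiSum χ (χ ^ 2) = jacobiSum χ χ := by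
    refine mul_right_cancel₀ hq ?_
    have h1 := key 1 2 1 (by decide) (by decide)
    have h2 := key 1 1 2 (by decide) (by decide)
    rw [pow_one] at h1 h2
    rw [h1, h2]; ring
  have j23 : jacobiSum (χ ^ 2) (χ ^ 3) = jacobiSum (χ ^ 3) (χ ^ 3) := by
    refine mul_right_cancel₀ hq ?_
    rw [key 2 3 3 (by decide) (by decide), key 3 3 2 (by decide) (by decide)]
    ring
  have hinv1 : χ⁻¹ = χ ^ 3 := inv_eq_of_mul_eq_one_right <| by
    rw [← pow_succ', hχ.pow_eq_one]
  have hinv2 : (χ ^ 2)⁻¹ = χ ^ 2 := inv_eq_of_mul_eq_one_right <| by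
    rw [← pow_add, hχ.pow_eq_one]
  have j13 : jacobiSum χ (χ ^ 3) = -1 := by
    rw [← hinv1, jacobiSum_nontrivial_inv (hχ.ne_one (by decide)), hχneg]
  have j22 : jacobiSum (χ ^ 2) (χ ^ 2) = -1 := by
    nth_rw 2 [← hinv2]
    rw [jacobiSum_nontrivial_inv hχ2, MulChar.pow_apply_neg_one_eq_one hχneg]
  simp only [sum_range_succ, sum_range_zero, zero_add]
  rw [jacobiSum_comm (χ ^ 1) (χ ^ 0), jacobiSum_comm (χ ^ 2) (χ ^ 0),
    jacobiSum_comm (χ ^ 3) (χ ^ 0), jacobiSum_comm (χ ^ 2) (χ ^ 1),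
    jacobiSum_comm (χ ^ 3) (χ ^ 1), jacobiSum_comm (χ ^ 3) (χ ^ 2)]
  simp only [pow_zero, pow_one, jacobiSum_one_one, j12, j13, j22, j23,
    jacobiSum_one_nontrivial (hχ.ne_one (by decide)),
    jacobiSum_one_nontrivial hχ2, jacobiSum_one_nontrivial hχ3]
  ring

lemma sum_pow_four_gaussianPeriod_of_isPrimitiveRoot_four (hχ : IsPrimitiveRoot χ 4)
    (hχneg : χ (-1) = 1) (hψ : ψ ≠ 1) :
    ∑ s ∈ range 4, (4 * gaussianPeriod χ ψ (I ^ s)) ^ 4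
      = 4 * (1 + 18 * Fintype.card F + 17 * Fintype.card F ^ 2
        - 12 * Fintype.card F * (jacobiSum χ χ + jacobiSum (χ ^ 3) (χ ^ 3))
        + Fintype.card F * (jacobiSum χ χ + jacobiSum (χ ^ 3) (χ ^ 3)) ^ 2) := by
  have hperiod : ∀ s, 4 * gaussianPeriod χ ψ (I ^ s)
      = ∑ m ∈ range 4, ((I ^ s)⁻¹) ^ m * gaussSum (χ ^ m) ψ := fun s ↦ by
    exact_mod_cast mul_gaussianPeriod hχ.pow_eq_one ψ
      (by rw [← pow_mul, mul_comm, pow_mul, I_pow_four, one_pow])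
  have hχ1 : χ ≠ 1 := hχ.ne_one (by decide)
  have hχ2 : χ ^ 2 ≠ 1 := hχ.pow_ne_one_of_pos_of_lt two_ne_zero (by decide)
  have g0 : gaussSum (χ ^ 0) ψ = -1 := by rw [pow_zero]; exact gaussSum_one_left hψ
  have g13 := gaussSum_pow_mul_gaussSum_pow_eq_card hχ (by rfl) one_ne_zero three_ne_zero hχneg hψ
  have g22 := gaussSum_pow_mul_gaussSum_pow_eq_card hχ (by rfl) two_ne_zero two_ne_zero hχneg hψ
  have g11 : gaussSum (χ ^ 1) ψ ^ 2 = gaussSum (χ ^ 2) ψ * jacobiSum χ χ := by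
    rw [pow_one, sq, ← jacobiSum_mul_nontrivial (by rwa [← sq]), ← sq]
  have g33 : gaussSum (χ ^ 3) ψ ^ 2 = gaussSum (χ ^ 2) ψ * jacobiSum (χ ^ 3) (χ ^ 3) := by
    have h : χ ^ 3 * χ ^ 3 = χ ^ 2 := by
      rw [← pow_add, show 3 + 3 = 4 + 2 by rfl, pow_add, hχ.pow_eq_one, one_mul]
    rw [sq, ← jacobiSum_mul_nontrivial (by rwa [h]), h]
  have hJK : jacobiSum χ χ * jacobiSum (χ ^ 3) (χ ^ 3) = Fintype.card F := by
    have hinv : χ⁻¹ = χ ^ 3 := inv_eq_of_mul_eq_one_right <| by rw [← pow_succ', hχ.pow_eq_one]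
    rw [← hinv]
    refine jacobiSum_mul_jacobiSum_inv ?_ hχ1 hχ1 (by rwa [← sq])
    rw [ringChar.eq_zero]
    exact (CharP.ringChar_ne_zero_of_finite F).symm
  simp only [hperiod]
  rw [sum_dft_four_pow_four, g0]
  set b := gaussSum (χ ^ 1) ψ
  set c := gaussSum (χ ^ 2) ψ
  set d := gaussSum (χ ^ 3) ψ
  set J := jacobiSum χ χ
  set K := jacobiSum (χ ^ 3) (χ ^ 3)
  set q : ℂ := (Fintype.card F : ℂ)
  linear_combination 4 * ((b ^ 2 + c * J - 12 * c) * g11 + (d ^ 2 + c * K - 12 * c) * g33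
    + (J ^ 2 + K ^ 2 + c ^ 2 + 13 * q + 6 - 12 * (J + K)) * g22
    + (12 + 6 * (b * d + q) + 12 * c ^ 2) * g13 - 2 * q * hJK)

end Quartic

/-- If `p ≡ 1 (mod 8)` and `d = 4`, then
`V₄(p) = (256 p t₀² - (32p² + 224p) t₀ + p³ + 167p² - 113p + 9)/576`,
where `t₀ = #{(a,b) ∈ Γ² : a + b = 1}` and `Γ` is the group of fourth powers. -/
theorem gaussian_periods_V4_d4_p1mod8 (p k : ℕ) (hp : p.Prime) (hmod : p % 8 = 1)
    (hk : p - 1 = 4 * k)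
    (g : (ZMod p)ˣ) (hg : ∀ x : (ZMod p)ˣ, x ∈ Subgroup.zpowers g)
    (η : ℕ → ℂ)
    (hη : ∀ a : ℕ, η a = ∑ j ∈ Finset.range k,
      Complex.exp (2 * (Real.pi : ℂ) * Complex.I *
        (((g ^ (4 * j + a) : (ZMod p)ˣ) : ZMod p).val : ℂ) / (p : ℂ)))
    (t₀ : ℕ)
    (ht : t₀ = Nat.card {ab : (ZMod p)ˣ × (ZMod p)ˣ //
      ab.1 ∈ Subgroup.zpowers (g ^ 4) ∧ ab.2 ∈ Subgroup.zpowers (g ^ 4) ∧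
      (ab.1 : ZMod p) + (ab.2 : ZMod p) = 1}) :
    ∑ s ∈ Finset.range 4, ‖η s‖ ^ 4
      = (256 * (p : ℝ) * (t₀ : ℝ) ^ 2 - (32 * (p : ℝ) ^ 2 + 224 * p) * t₀
          + (p : ℝ) ^ 3 + 167 * (p : ℝ) ^ 2 - 113 * p + 9) / 576 := by
  have := Fact.mk hp
  obtain ⟨χ, hχg⟩ := MulChar.exists_apply_eq_I hg ⟨k, by rw [ZMod.card_units, hk]⟩
  have hζ : IsPrimitiveRoot (χ g) 4 := hχg ▸ isPrimitiveRoot_I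
  have hχ := MulChar.isPrimitiveRoot_of_apply_generator hg hζ
  have hχneg : χ (-1) = 1 := by
    rw [← ZMod.pow_div_two_eq_neg_one_of_forall_mem_zpowers (by omega) hg, map_pow,
      show p / 2 = 4 * (p / 8) by omega, pow_mul, hζ.pow_eq_one, one_pow]
  set ψ : AddChar (ZMod p) ℂ := ZMod.stdAddChar
  have hψ : ψ ≠ 1 := fun h ↦ ZMod.isPrimitive_stdAddChar p one_ne_zero <| by
    rw [AddChar.mulShift_one, show ZMod.stdAddChar = ψ from rfl, h]
  have hgord : orderOf g = 4 * k := by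
    rw [orderOf_eq_card_of_forall_mem_zpowers hg, Nat.card_eq_fintype_card, ZMod.card_units, hk]
  have hperiod : ∀ s < 4, η s = gaussianPeriod χ ψ (I ^ s) := fun s hs ↦ by
    rw [hη, ← hχg, ← sum_range_pow_generator_eq_gaussianPeriod hg hζ hgord hs ψ, hχg]
    simp [ψ, ZMod.stdAddChar_apply, ZMod.toCircle_apply]
  have hcount : (4 : ℂ) ^ 2 * t₀
      = p - 11 + 3 * (jacobiSum χ χ + jacobiSum (χ ^ 3) (χ ^ 3)) := by
    have h := sum_jacobiSum_pow_pow_of_isPrimitiveRoot_four hχ hχneg hψ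
    rw [sum_jacobiSum_pow_pow hχ.pow_eq_one, ZMod.card,
      ← natCard_pairs_add_eq_one (MulChar.mem_zpowers_pow_iff hg hζ), ← ht] at h
    exact_mod_cast h
  have hsum := sum_pow_four_gaussianPeriod_of_isPrimitiveRoot_four hχ hχneg hψ
  simp only [ZMod.card, mul_pow, ← mul_sum] at hsum
  apply ofReal_injective
  rw [ofReal_sum, sum_congr rfl fun s hs ↦ by
    rw [hperiod s (mem_range.1 hs), ofReal_norm_pow_of_conj_eq (conj_gaussianPeriod hχneg ψ _)
      (by decide)]]
  push_cast
  linear_combination hsum / 256 - p * (jacobiSum χ χ + jacobiSum (χ ^ 3) (χ ^ 3)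
    + (16 * t₀ - p + 11) / 3 - 12) / 192 * hcount
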